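/- arXiv:2407.18157 — 2 statements merged into one kernel-verified Lean document; each statement's English description precedes it below -/
import Mathlib

section
/- For two Laplace distributions Lap(μ₀, b) and Lap(μ₁, b) with μ₀ < μ₁ and scale b > 0, the likelihood-ratio rejection region S = {z : density₀(z) < density₁(z)} equals the interval ((μ₀+μ₁)/2, ∞), and the probability of Lap(μ₀, b) assigning mass to S equals (1/2)·exp(−(μ₁−μ₀)/(2b)). -/
/-! The density is a decreasing function of `|z - μ|`, so `Lap(μ₁, b)` beats `Lap(μ₀, b)` exactly
where `z` is closer to `μ₁`, i.e. beyond the midpoint `m`. On that half-line the density of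
`Lap(μ₀, b)` is the exponential `(1/(2b)) · exp (-(z - μ₀) / b)`, whose mass beyond `m` is
`(1/2) · exp (-(m - μ₀) / b)`. -/

open Real MeasureTheory

/-- Density of the Laplace distribution `Lap(μ, b)`. -/
noncomputable def lapDensity (μ b z : ℝ) : ℝ := (1 / (2 * b)) * Real.exp (-|z - μ| / b)

lemma lapDensity_lt_lapDensity_iff {μ0 μ1 b : ℝ} (hb : 0 < b) (z : ℝ) :
    lapDensity μ0 b z < lapDensity μ1 b z ↔ |z - μ1| < |z - μ0| := by
  rw [lapDensity, lapDensity, mul_lt_mul_iff_right₀ (by positivity), exp_lt_exp,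
    div_lt_div_iff_of_pos_right hb, neg_lt_neg_iff]

lemma abs_sub_lt_abs_sub_iff_midpoint_lt {μ0 μ1 : ℝ} (h : μ0 < μ1) (z : ℝ) :
    |z - μ1| < |z - μ0| ↔ (μ0 + μ1) / 2 < z := by
  rw [← sq_lt_sq, ← sub_pos]
  have hsq : (z - μ0) ^ 2 - (z - μ1) ^ 2 = 2 * (μ1 - μ0) * (z - (μ0 + μ1) / 2) := by ring
  rw [hsq, mul_pos_iff_of_pos_left (by linarith), sub_pos]

lemma lapDensity_of_le {μ b z : ℝ} (hz : μ ≤ z) :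
    lapDensity μ b z = (1 / (2 * b) * exp (μ / b)) * exp (-b⁻¹ * z) := by
  rw [lapDensity, abs_of_nonneg (sub_nonneg.mpr hz), mul_assoc, ← exp_add]
  congr 2
  ring

lemma integral_Ioi_lapDensity {μ b a : ℝ} (hb : 0 < b) (ha : μ ≤ a) :
    ∫ z in Set.Ioi a, lapDensity μ b z = 1 / 2 * exp (-(a - μ) / b) := by
  have hdens : Set.EqOn (lapDensity μ b) (fun z ↦ (1 / (2 * b) * exp (μ / b)) * exp (-b⁻¹ * z))
      (Set.Ioi a) := fun z hz ↦ lapDensity_of_le (ha.trans hz.le)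
  rw [setIntegral_congr_fun measurableSet_Ioi hdens, integral_const_mul,
    integral_exp_mul_Ioi (neg_lt_zero.mpr (inv_pos.mpr hb)), mul_assoc, mul_div_assoc',
    mul_neg, ← exp_add]
  field_simp
  ring_nf

/-- For two Laplace distributions with the same scale, the likelihood-ratio rejection
region is the half-line beyond the midpoint, and its mass under `Lap(μ₀, b)` equals
`(1/2)·exp(−(μ₁−μ₀)/(2b))`. -/
theorem laplace_rejection_region (μ0 μ1 b : ℝ) (h : μ0 < μ1) (hb : 0 < b) :
    {z : ℝ | lapDensity μ0 b z < lapDensity μ1 b z} = Set.Ioi ((μ0 + μ1) / 2) ∧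
    (∫ z in Set.Ioi ((μ0 + μ1) / 2), lapDensity μ0 b z)
      = (1 / 2) * Real.exp (-(μ1 - μ0) / (2 * b)) := by
  refine ⟨?_, ?_⟩
  · ext z
    rw [Set.mem_ofPred_eq, lapDensity_lt_lapDensity_iff hb, abs_sub_lt_abs_sub_iff_midpoint_lt h,
      Set.mem_Ioi]
  · rw [integral_Ioi_lapDensity hb (by linarith)]
    congr 2
    field_simp
    ring
end

section
/- If a mechanism M satisfies f-DP where f(α) = 1 − δ − e^ε·α for α ≤ (1−δ)/(e^ε) extended by convexity (i.e., f = f_{ε,δ} = max(0, 1 − δ − e^ε α, e^{−ε}(1 − δ − α))), then M is (ε, δ)-DP, and conversely. -/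
open Real Finset

/-- The trade-off function `f_{ε,δ}`. -/
noncomputable def fEpsDelta (ε δ α : ℝ) : ℝ :=
  max 0 (max (1 - δ - Real.exp ε * α) (Real.exp (-ε) * (1 - δ - α)))

/-! A test `φ` with errors `α = E_P φ`, `β = 1 - E_Q φ` lies above `f_{ε,δ}` exactly when
`β ≥ 0`, `E_Q φ ≤ e^ε E_P φ + δ` and `E_P (1 - φ) ≤ e^ε E_Q (1 - φ) + δ`. Indicator tests turn
these into the `(ε, δ)` inequalities for events. Conversely, an inequality `A(E) ≤ c B(E) + δ`
holding for all events extends to randomized tests, because `∑ φ (A - c B) ≤ ∑_E (A - c B)` for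
`0 ≤ φ ≤ 1` and the event `E = {A > c B}`; applying this to `φ` and to `1 - φ` gives both
constraints. -/

lemma fEpsDelta_le_iff {ε δ α β : ℝ} :
    fEpsDelta ε δ α ≤ β ↔ 0 ≤ β ∧ 1 - δ - exp ε * α ≤ β ∧ 1 - δ - α ≤ exp ε * β := by
  rw [fEpsDelta, max_le_iff, max_le_iff, exp_neg, inv_mul_le_iff₀ (exp_pos ε)]

section Tests

variable {Z : Type*} [Fintype Z]

lemma sum_mul_le_of_forall_finset_sum_le {c δ : ℝ} {A B φ : Z → ℝ}
    (hφ : ∀ z, 0 ≤ φ z ∧ φ z ≤ 1)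
    (h : ∀ E : Finset Z, ∑ z ∈ E, A z ≤ c * ∑ z ∈ E, B z + δ) :
    ∑ z, φ z * A z ≤ c * ∑ z, φ z * B z + δ := by
  classical
  set E := univ.filter fun z => 0 < A z - c * B z
  have hφE : ∑ z, φ z * (A z - c * B z) ≤ ∑ z ∈ E, (A z - c * B z) := by
    rw [sum_filter]
    refine sum_le_sum fun z _ => ?_
    obtain ⟨hφ0, hφ1⟩ := hφ z
    split_ifs with hz
    · exact mul_le_of_le_one_left hz.le hφ1
    · exact mul_nonpos_of_nonneg_of_nonpos hφ0 (not_lt.1 hz)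
  simp only [mul_sub, sum_sub_distrib, mul_left_comm _ c, ← mul_sum] at hφE
  linarith [h E]

lemma sum_one_sub_mul {P φ : Z → ℝ} (hP1 : ∑ z, P z = 1) :
    ∑ z, (1 - φ z) * P z = 1 - ∑ z, φ z * P z := by
  simp only [sub_mul, one_mul, sum_sub_distrib, hP1]

lemma sum_mul_le_one {P φ : Z → ℝ} (hP0 : ∀ z, 0 ≤ P z) (hP1 : ∑ z, P z = 1)
    (hφ1 : ∀ z, φ z ≤ 1) : ∑ z, φ z * P z ≤ 1 :=
  hP1 ▸ sum_le_sum fun z _ => mul_le_of_le_one_left (hP0 z) (hφ1 z)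

lemma sum_ite_mem_mul [DecidableEq Z] (E : Finset Z) (P : Z → ℝ) :
    ∑ z, (if z ∈ E then 1 else 0) * P z = ∑ z ∈ E, P z := by
  simp only [ite_mul, one_mul, zero_mul, sum_ite_mem, univ_inter]

lemma fEpsDelta_le_of_forall_finset {ε δ : ℝ} {P Q φ : Z → ℝ} (hQ0 : ∀ z, 0 ≤ Q z)
    (hP1 : ∑ z, P z = 1) (hQ1 : ∑ z, Q z = 1)
    (hPQ : ∀ E : Finset Z, ∑ z ∈ E, P z ≤ exp ε * ∑ z ∈ E, Q z + δ)
    (hQP : ∀ E : Finset Z, ∑ z ∈ E, Q z ≤ exp ε * ∑ z ∈ E, P z + δ)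
    (hφ : ∀ z, 0 ≤ φ z ∧ φ z ≤ 1) :
    fEpsDelta ε δ (∑ z, φ z * P z) ≤ 1 - ∑ z, φ z * Q z := by
  have hQφ : ∑ z, φ z * Q z ≤ exp ε * ∑ z, φ z * P z + δ :=
    sum_mul_le_of_forall_finset_sum_le hφ hQP
  have hcompl : ∑ z, (1 - φ z) * P z ≤ exp ε * ∑ z, (1 - φ z) * Q z + δ :=
    sum_mul_le_of_forall_finset_sum_le (fun z => ⟨by linarith [hφ z], by linarith [hφ z]⟩) hPQ
  rw [sum_one_sub_mul hP1, sum_one_sub_mul hQ1] at hcompl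
  refine fEpsDelta_le_iff.2 ⟨?_, by linarith, by linarith⟩
  linarith [sum_mul_le_one hQ0 hQ1 fun z => (hφ z).2]

end Tests

theorem fEpsDelta_dp_iff_dp_general {Z : Type*} [Fintype Z] (ε δ : ℝ)
    (P Q : Z → ℝ) (hP0 : ∀ z, 0 ≤ P z) (hQ0 : ∀ z, 0 ≤ Q z)
    (hP1 : ∑ z, P z = 1) (hQ1 : ∑ z, Q z = 1) :
    (∀ φ : Z → ℝ, (∀ z, 0 ≤ φ z ∧ φ z ≤ 1) →
        fEpsDelta ε δ (∑ z, φ z * P z) ≤ 1 - ∑ z, φ z * Q z ∧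
        fEpsDelta ε δ (∑ z, φ z * Q z) ≤ 1 - ∑ z, φ z * P z) ↔
    (∀ E : Finset Z, (∑ z ∈ E, P z) ≤ Real.exp ε * (∑ z ∈ E, Q z) + δ ∧
        (∑ z ∈ E, Q z) ≤ Real.exp ε * (∑ z ∈ E, P z) + δ) := by
  classical
  constructor
  · intro h E
    obtain ⟨hPE, hQE⟩ := h (fun z => if z ∈ E then 1 else 0) fun z => by split_ifs <;> norm_num
    simp only [sum_ite_mem_mul] at hPE hQE
    exact ⟨by linarith [(fEpsDelta_le_iff.1 hQE).2.1], by linarith [(fEpsDelta_le_iff.1 hPE).2.1]⟩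
  · intro h φ hφ
    exact ⟨fEpsDelta_le_of_forall_finset hQ0 hP1 hQ1 (fun E => (h E).1) (fun E => (h E).2) hφ,
      fEpsDelta_le_of_forall_finset hP0 hQ1 hP1 (fun E => (h E).2) (fun E => (h E).1) hφ⟩

/-- A mechanism is `f_{ε,δ}`-DP iff it is `(ε, δ)`-DP. -/
theorem fEpsDelta_dp_iff_dp {Z : Type*} [Fintype Z] (ε δ : ℝ) (hε : 0 ≤ ε) (hδ : 0 ≤ δ)
    (P Q : Z → ℝ) (hP0 : ∀ z, 0 ≤ P z) (hQ0 : ∀ z, 0 ≤ Q z)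
    (hP1 : ∑ z, P z = 1) (hQ1 : ∑ z, Q z = 1) :
    (∀ φ : Z → ℝ, (∀ z, 0 ≤ φ z ∧ φ z ≤ 1) →
        fEpsDelta ε δ (∑ z, φ z * P z) ≤ 1 - ∑ z, φ z * Q z ∧
        fEpsDelta ε δ (∑ z, φ z * Q z) ≤ 1 - ∑ z, φ z * P z) ↔
    (∀ E : Finset Z, (∑ z ∈ E, P z) ≤ Real.exp ε * (∑ z ∈ E, Q z) + δ ∧
        (∑ z ∈ E, Q z) ≤ Real.exp ε * (∑ z ∈ E, P z) + δ) :=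
  fEpsDelta_dp_iff_dp_general ε δ P Q hP0 hQ0 hP1 hQ1
end
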